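/- arXiv:2212.12880 — 6 statements merged into one kernel-verified Lean document; each statement's English description precedes it below -/
import Mathlib

section
/- If Q₀, ..., Q_k are (chains of) projectors on ℝ^m such that each Q_i projects onto a subspace N_i with (N₀ ⊕ ⋯ ⊕ N_{i-1}) ∩ N_i = {0} and Q_i Q_j = 0 for all 0 ≤ j < i, then setting P_i = I − Q_i and Π_k = P₀ P₁ ⋯ P_k, the kernel of Π_k equals the (internal) direct sum N₀ ⊕ N₁ ⊕ ⋯ ⊕ N_k. -/
/-!
Induct on `k`. Splitting `x = (1 - Q) x + Q x` shows that the kernel of `A * (1 - Q)` is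
`ker A ⊔ range Q` as soon as `Q` is idempotent and vanishes on `ker A`. With `A = Π_{k-1}`,
whose kernel is `N₀ + ⋯ + N_{k-1}` by induction, admissibility `Q_k Q_j = 0` says exactly that
`Q_k` vanishes on `ker A`.
-/

noncomputable def piProd {m : ℕ} (Q : ℕ → Module.End ℝ (Fin m → ℝ)) (k : ℕ) :
    Module.End ℝ (Fin m → ℝ) :=
  ((List.range (k + 1)).map (fun i => 1 - Q i)).prod

/-- `Π_{k-1}` with the convention `Π_{-1} = 1`. -/
noncomputable def piPred {m : ℕ} (Q : ℕ → Module.End ℝ (Fin m → ℝ)) (k : ℕ) :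
    Module.End ℝ (Fin m → ℝ) :=
  if k = 0 then 1 else piProd Q (k - 1)

/-- `M_k = Π_{k-1} - Π_k`. -/
noncomputable def Mdiff {m : ℕ} (Q : ℕ → Module.End ℝ (Fin m → ℝ)) (k : ℕ) :
    Module.End ℝ (Fin m → ℝ) :=
  piPred Q k - piProd Q k

/-- ascending product `P_a * P_(a+1) * ... * P_b` (empty product `1` if `b < a`). -/
noncomputable def ascProd {m : ℕ} (Q : ℕ → Module.End ℝ (Fin m → ℝ)) (a b : ℕ) :
    Module.End ℝ (Fin m → ℝ) :=
  ((List.range (b + 1 - a)).map (fun t => 1 - Q (a + t))).prod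

/-- descending product `P_hi * P_(hi-1) * ... * P_lo`. -/
noncomputable def descProd {m : ℕ} (Q : ℕ → Module.End ℝ (Fin m → ℝ)) (hi lo : ℕ) :
    Module.End ℝ (Fin m → ℝ) :=
  ((List.range (hi + 1 - lo)).map (fun t => 1 - Q (hi - t))).prod

namespace LinearMap

variable {R M : Type*} [Ring R] [AddCommGroup M] [Module R M]

theorem ker_mul_one_sub_eq_sup {A Q : Module.End R M} (hQ : IsIdempotentElem Q)
    (hAQ : ker A ≤ ker Q) : ker (A * (1 - Q)) = ker A ⊔ range Q := by
  refine le_antisymm (fun x hx => ?_) (sup_le (fun x hx => ?_) ?_)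
  · rw [← sub_add_cancel x (Q x)]
    exact Submodule.add_mem_sup hx (mem_range_self Q x)
  · simp [mem_ker.mp hx, mem_ker.mp (hAQ hx)]
  · rw [range_le_ker_iff, ← Module.End.mul_eq_comp, mul_assoc, hQ.one_sub_mul_self, mul_zero]

theorem ker_prod_one_sub_eq_iSup_range (Q : ℕ → Module.End R M) (n : ℕ)
    (hidem : ∀ i < n, IsIdempotentElem (Q i)) (hadm : ∀ i < n, ∀ j < i, Q i * Q j = 0) :
    ker ((List.range n).map (fun i => 1 - Q i)).prod = ⨆ i ∈ Finset.range n, range (Q i) := by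
  induction n with
  | zero => simp [Module.End.one_eq_id]
  | succ n ih =>
    have hker : ker ((List.range n).map (fun i => 1 - Q i)).prod =
        ⨆ i ∈ Finset.range n, range (Q i) :=
      ih (fun i hi => hidem i (by omega)) (fun i hi => hadm i (by omega))
    have hQn : ker ((List.range n).map (fun i => 1 - Q i)).prod ≤ ker (Q n) := by
      rw [hker]
      exact iSup₂_le fun j hj =>
        range_le_ker_iff.mpr (hadm n n.lt_succ_self j (Finset.mem_range.mp hj))
    rw [List.range_succ, List.map_append, List.prod_append, List.map_singleton,
      List.prod_singleton, ker_mul_one_sub_eq_sup (hidem n n.lt_succ_self) hQn, hker,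
      Finset.range_add_one, Finset.iSup_insert, sup_comm]

end LinearMap

theorem kernel_of_Pi_eq_directSum_general {m : ℕ} (k : ℕ)
    (Q : ℕ → Module.End ℝ (Fin m → ℝ))
    (hidem : ∀ i ≤ k, Q i * Q i = Q i)
    (hadm : ∀ i ≤ k, ∀ j < i, Q i * Q j = 0) :
    LinearMap.ker (piProd Q k) = ⨆ i ∈ Finset.range (k + 1), LinearMap.range (Q i) :=
  LinearMap.ker_prod_one_sub_eq_iSup_range Q (k + 1)
    (fun i hi => hidem i (Nat.lt_succ_iff.mp hi))
    (fun i hi => hadm i (Nat.lt_succ_iff.mp hi))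

theorem kernel_of_Pi_eq_directSum {m : ℕ} (k : ℕ)
    (Q : ℕ → Module.End ℝ (Fin m → ℝ))
    (hidem : ∀ i ≤ k, Q i * Q i = Q i)
    (hind : ∀ i ≤ k,
      (⨆ j ∈ Finset.range i, LinearMap.range (Q j)) ⊓ LinearMap.range (Q i) = ⊥)
    (hadm : ∀ i ≤ k, ∀ j < i, Q i * Q j = 0) :
    LinearMap.ker (piProd Q k) = ⨆ i ∈ Finset.range (k + 1), LinearMap.range (Q i) :=
  kernel_of_Pi_eq_directSum_general k Q hidem hadm
end

section
/- Let Q₀, ..., Q_{ν−1} be projectors on ℝ^m with Q_i Q_j = 0 for j < i. Define P_i = I − Q_i, Π_i = P₀ ⋯ P_i (with Π_{−1} = I), and M_i = Π_{i−1} − Π_i. Then M_i M_j = 0 if i ≠ j and M_i M_i = M_i; in particular each M_i is a projector. -/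
noncomputable def prodR {m : ℕ} (Q : ℕ → Module.End ℝ (Fin m → ℝ)) (n : ℕ) :
    Module.End ℝ (Fin m → ℝ) :=
  ((List.range n).map (fun i => 1 - Q i)).prod

lemma prodR_succ {m : ℕ} (Q : ℕ → Module.End ℝ (Fin m → ℝ)) (n : ℕ) :
    prodR Q (n + 1) = prodR Q n * (1 - Q n) := by
  simp [prodR, List.range_succ]

lemma piPred_eq {m : ℕ} (Q : ℕ → Module.End ℝ (Fin m → ℝ)) (k : ℕ) :
    piPred Q k = prodR Q k := by
  cases k with
  | zero => simp [piPred, prodR]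
  | succ k => simp [piPred, piProd, prodR]

lemma Mdiff_eq {m : ℕ} (Q : ℕ → Module.End ℝ (Fin m → ℝ)) (k : ℕ) :
    Mdiff Q k = prodR Q k * Q k := by
  have h1 : piProd Q k = prodR Q (k + 1) := rfl
  rw [Mdiff, piPred_eq, h1, prodR_succ, mul_sub, mul_one, sub_sub_cancel]

lemma Q_mul_prodR {m ν : ℕ} (Q : ℕ → Module.End ℝ (Fin m → ℝ))
    (hadm : ∀ i < ν, ∀ j < i, Q i * Q j = 0) {i : ℕ} (hi : i < ν) :
    ∀ n ≤ i, Q i * prodR Q n = Q i := by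
  intro n hn
  induction n with
  | zero => simp [prodR]
  | succ n ih =>
    rw [prodR_succ, ← mul_assoc, ih (by omega), mul_sub, mul_one,
      hadm i hi n (by omega), sub_zero]

lemma Q_mul_prodR_zero {m ν : ℕ} (Q : ℕ → Module.End ℝ (Fin m → ℝ))
    (hidem : ∀ i < ν, Q i * Q i = Q i)
    (hadm : ∀ i < ν, ∀ j < i, Q i * Q j = 0) {i : ℕ} (hi : i < ν) :
    ∀ n, i < n → Q i * prodR Q n = 0 := by
  intro n hn
  induction n with
  | zero => omega
  | succ n ih =>
    rcases Nat.lt_or_ge i n with h | h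
    · rw [prodR_succ, ← mul_assoc, ih h, zero_mul]
    · have hin : n = i := by omega
      subst hin
      rw [prodR_succ, ← mul_assoc, Q_mul_prodR Q hadm hi n le_rfl,
        mul_sub, mul_one, hidem n hi, sub_self]

theorem Mdiff_mul_Mdiff {m ν : ℕ} (Q : ℕ → Module.End ℝ (Fin m → ℝ))
    (hidem : ∀ i < ν, Q i * Q i = Q i)
    (hadm : ∀ i < ν, ∀ j < i, Q i * Q j = 0) :
    ∀ i < ν, ∀ j < ν,
      (i ≠ j → Mdiff Q i * Mdiff Q j = 0) ∧ Mdiff Q i * Mdiff Q i = Mdiff Q i := by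
  intro i hi j hj
  constructor
  · intro hne
    rw [Mdiff_eq, Mdiff_eq]
    rcases Nat.lt_or_gt_of_ne hne with h | h
    · -- i < j
      have : Q i * prodR Q j = 0 := Q_mul_prodR_zero Q hidem hadm hi j h
      rw [mul_assoc, ← mul_assoc (Q i), this, zero_mul, mul_zero]
    · -- j < i
      have h1 : Q i * prodR Q j = Q i := Q_mul_prodR Q hadm hi j (le_of_lt h)
      rw [mul_assoc, ← mul_assoc (Q i), h1, hadm i hi j h, mul_zero]
  · rw [Mdiff_eq]
    have h1 : Q i * prodR Q i = Q i := Q_mul_prodR Q hadm hi i le_rfl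
    rw [mul_assoc, ← mul_assoc (Q i), h1, hidem i hi]
end

section
/- Under the matrix chain recursion G_i = G_{i−1} + C_{i−1} Q_{i−1} with im Q_{i−1} = ker G_{i−1}, one has G₀ = G_i P_{i−1} ⋯ P₀ for 1 ≤ i ≤ ν, and G_i = G_ν P_{ν−1} ⋯ P_i for 0 ≤ i ≤ ν. -/
/-- descending product `P_hi * P_(hi-1) * ... * P_lo` of matrices `P_j = 1 - Q j`. -/
noncomputable def descProdM {m : ℕ} (Q : ℕ → Matrix (Fin m) (Fin m) ℝ) (hi lo : ℕ) :
    Matrix (Fin m) (Fin m) ℝ :=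
  ((List.range (hi + 1 - lo)).map (fun t => 1 - Q (hi - t))).prod

lemma descProdM_self {m : ℕ} (Q : ℕ → Matrix (Fin m) (Fin m) ℝ) (i : ℕ) :
    descProdM Q i i = 1 - Q i := by
  have h : i + 1 - i = 1 := by omega
  rw [descProdM, h, List.range_succ, List.range_zero]; simp

lemma descProdM_split {m : ℕ} (Q : ℕ → Matrix (Fin m) (Fin m) ℝ) (hi lo : ℕ) (h : lo ≤ hi) :
    descProdM Q hi lo = descProdM Q hi (lo + 1) * (1 - Q lo) := by
  unfold descProdM
  have h1 : hi + 1 - lo = (hi + 1 - (lo + 1)) + 1 := by omega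
  have h2 : hi - (hi - lo) = lo := by omega
  rw [h1, List.range_succ, List.map_append, List.prod_append]
  simp [h2]

theorem chain_G_prod {m ν : ℕ} (hν : 1 ≤ ν)
    (G C Q : ℕ → Matrix (Fin m) (Fin m) ℝ)
    (hidem : ∀ i < ν, Q i * Q i = Q i)
    (hker : ∀ i < ν,
      LinearMap.range (Matrix.mulVecLin (Q i)) = LinearMap.ker (Matrix.mulVecLin (G i)))
    (hrec : ∀ i < ν, G (i + 1) = G i + C i * Q i) :
    (∀ i, 1 ≤ i → i ≤ ν → G 0 = G i * descProdM Q (i - 1) 0) ∧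
    (∀ i < ν, G i = G ν * descProdM Q (ν - 1) i) ∧ G ν = G ν := by
  have hGQ : ∀ i < ν, G i * Q i = 0 := by
    intro i hi
    have hv : ∀ v, (G i * Q i).mulVec v = 0 := by
      intro v
      have hmem : (Q i).mulVec v ∈ LinearMap.range (Matrix.mulVecLin (Q i)) :=
        ⟨v, rfl⟩
      rw [hker i hi] at hmem
      have := hmem
      simpa [Matrix.mulVec_mulVec] using this
    ext a b
    have := congrFun (hv (Pi.single b 1)) a
    simpa [Matrix.mulVec_single] using this
  have hstep : ∀ i < ν, G (i + 1) * (1 - Q i) = G i := by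
    intro i hi
    rw [hrec i hi, add_mul, mul_sub, mul_sub, mul_one, mul_one, mul_assoc,
      hidem i hi, hGQ i hi, sub_zero, sub_self, add_zero]
  have key : ∀ n, ∀ i, 1 ≤ n → i + n ≤ ν → G i = G (i + n) * descProdM Q (i + n - 1) i := by
    intro n
    induction n with
    | zero => intro i h; omega
    | succ n ih =>
      intro i _ hle
      rcases Nat.eq_zero_or_pos n with hn | hn
      · subst hn
        have h1 : i + 1 - 1 = i := by omega
        rw [h1, descProdM_self, hstep i (by omega)]
      · have hstep' : G i = G (i + 1) * (1 - Q i) := (hstep i (by omega)).symm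
        have ihh := ih (i + 1) hn (by omega)
        have hsplit := descProdM_split Q (i + n) i (by omega)
        have e1 : i + 1 + n = i + (n + 1) := by omega
        have e2 : i + (n + 1) - 1 = i + n := by omega
        rw [e1, e2] at ihh
        rw [hstep', ihh, mul_assoc, ← hsplit]
        have e3 : i + (n + 1) - 1 = i + n := by omega
        rw [e3]
  refine ⟨?_, ?_, rfl⟩
  · intro i h1 h2
    have := key i 0 h1 (by omega)
    simpa using this
  · intro i hi
    have := key (ν - i) i (by omega) (by omega)
    have e : i + (ν - i) = ν := by omega
    rw [e] at this
    exact this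
end

section
/- Suppose the matrix chain G_i = G_{i−1} + C_{i−1} Q_{i−1} (with im Q_{i−1} = ker G_{i−1}, Q's admissible: Q_i Q_j = 0 for j < i) reaches a nonsingular G_ν. Then G_ν⁻¹ G_i = I − Q_i − Q_{i+1} − ⋯ − Q_{ν−1} for each 0 ≤ i ≤ ν−1; in particular G_ν⁻¹ G₀ = I − Q₀ − ⋯ − Q_{ν−1}. -/
theorem Ginv_mul_G {m ν : ℕ} (hν : 1 ≤ ν)
    (G C Q : ℕ → Matrix (Fin m) (Fin m) ℝ)
    (hidem : ∀ i < ν, Q i * Q i = Q i)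
    (hadm : ∀ i < ν, ∀ j < i, Q i * Q j = 0)
    (hker : ∀ i < ν,
      LinearMap.range (Matrix.mulVecLin (Q i)) = LinearMap.ker (Matrix.mulVecLin (G i)))
    (hrec : ∀ i < ν, G (i + 1) = G i + C i * Q i)
    (hinv : IsUnit (G ν)) :
    ∀ i < ν, (G ν)⁻¹ * G i = 1 - ∑ j ∈ Finset.Icc i (ν - 1), Q j := by
  -- G i * Q i = 0
  have hGQ : ∀ i < ν, G i * Q i = 0 := by
    intro i hi
    have h : ∀ x, (G i * Q i).mulVec x = 0 := by
      intro x
      have hx : (Q i).mulVecLin x ∈ LinearMap.range ((Q i).mulVecLin) :=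
        LinearMap.mem_range_self _ x
      rw [hker i hi, LinearMap.mem_ker] at hx
      simpa [Matrix.mulVecLin_apply, Matrix.mulVec_mulVec] using hx
    ext a b
    have := congrFun (h (Pi.single b 1)) a
    simpa [Matrix.mulVec_single] using this
  -- key identity: G i = G ν * (1 - ∑)
  have key : ∀ d i, i + d = ν →
      G i = G ν * (1 - ∑ j ∈ Finset.Icc i (ν - 1), Q j) := by
    intro d
    induction d with
    | zero =>
      intro i hi
      rw [Finset.Icc_eq_empty (by omega : ¬ i ≤ ν - 1), Finset.sum_empty, sub_zero,
        mul_one]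
      rw [show ν = i from by omega]
    | succ d ih =>
      intro i hi
      have hiν : i < ν := by omega
      have step : G (i + 1) * (1 - Q i) = G i := by
        rw [hrec i hiν, add_mul, mul_sub, mul_sub, mul_one, mul_one, hGQ i hiν,
          mul_assoc, hidem i hiν]
        abel
      have ihv := ih (i + 1) (by omega)
      have hsplit : ∑ j ∈ Finset.Icc i (ν - 1), Q j
          = Q i + ∑ j ∈ Finset.Icc (i + 1) (ν - 1), Q j := by
        rw [Finset.Icc_eq_cons_Ioc (by omega : i ≤ ν - 1), Finset.sum_cons,
          ← Finset.Icc_add_one_left_eq_Ioc]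
      have hSQ : (∑ j ∈ Finset.Icc (i + 1) (ν - 1), Q j) * Q i = 0 := by
        rw [Finset.sum_mul]
        apply Finset.sum_eq_zero
        intro j hj
        simp only [Finset.mem_Icc] at hj
        exact hadm j (by omega) i (by omega)
      calc G i = G (i + 1) * (1 - Q i) := step.symm
        _ = G ν * (1 - ∑ j ∈ Finset.Icc (i + 1) (ν - 1), Q j) * (1 - Q i) := by rw [ihv]
        _ = G ν * (1 - ∑ j ∈ Finset.Icc i (ν - 1), Q j) := by
            rw [mul_assoc, hsplit]
            congr 1
            rw [sub_mul, one_mul, mul_sub, mul_one, hSQ]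
            abel
  intro i hi
  have hdet : IsUnit (G ν).det := (Matrix.isUnit_iff_isUnit_det _).mp hinv
  rw [key (ν - i) i (by omega), ← mul_assoc, Matrix.nonsing_inv_mul _ hdet, one_mul]
end

section
/- With admissible projectors Q₀, ..., Q_{ν−1}, for ν ≥ j > k the image of Q_k P_{k+1} ⋯ P_j equals N_k = im Q_k, and its kernel equals N₀ ⊕ ⋯ ⊕ N_{k−1} ⊕ N_{k+1} ⊕ ⋯ ⊕ N_j ⊕ im Π_j. -/
section OneSubProd

variable {R ι : Type*} [Ring R] (f : ι → R)

theorem prod_map_one_sub_mul_of_forall_mul_eq_zero {l : List ι} {a : R}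
    (h : ∀ t ∈ l, f t * a = 0) : (l.map fun t => 1 - f t).prod * a = a := by
  induction l with
  | nil => simp
  | cons t l ih =>
    simp only [List.forall_mem_cons] at h
    rw [List.map_cons, List.prod_cons, mul_assoc, ih h.2, sub_mul, one_mul, h.1, sub_zero]

theorem mul_prod_map_one_sub_of_forall_mul_eq_zero {l : List ι} {a : R}
    (h : ∀ t ∈ l, a * f t = 0) : a * (l.map fun t => 1 - f t).prod = a := by
  induction l with
  | nil => simp
  | cons t l ih =>
    simp only [List.forall_mem_cons] at h
    rw [List.map_cons, List.prod_cons, ← mul_assoc, mul_sub, mul_one, h.1, sub_zero, ih h.2]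

theorem prod_map_one_sub_mul_eq_zero {l₁ l₂ : List ι} {i : ι} (hi : IsIdempotentElem (f i))
    (h : ∀ t ∈ l₂, f t * f i = 0) : ((l₁ ++ i :: l₂).map fun t => 1 - f t).prod * f i = 0 := by
  rw [List.map_append, List.prod_append, List.map_cons, List.prod_cons, mul_assoc, mul_assoc,
    prod_map_one_sub_mul_of_forall_mul_eq_zero f h, sub_mul, one_mul, hi.eq, sub_self, mul_zero]

end OneSubProd

theorem range_one_sub_prod_map_one_sub_le {R M ι : Type*} [Ring R] [AddCommGroup M] [Module R M]
    (f : ι → Module.End R M) (l : List ι) :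
    LinearMap.range (1 - (l.map fun t => 1 - f t).prod) ≤ ⨆ t ∈ l, LinearMap.range (f t) := by
  induction l with
  | nil => simp
  | cons t l ih =>
    have key : 1 - ((t :: l).map fun t => 1 - f t).prod =
        (1 - (l.map fun t => 1 - f t).prod) + f t * (l.map fun t => 1 - f t).prod := by
      rw [List.map_cons, List.prod_cons]; noncomm_ring
    simp only [List.mem_cons, iSup_or, iSup_sup_eq, iSup_iSup_eq_left]
    rw [key]
    refine (LinearMap.range_add_le _ _).trans (sup_le (ih.trans le_sup_right) ?_)
    exact (LinearMap.range_comp_le_range _ _).trans le_sup_left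

theorem ascProd_eq_prod_range' {m : ℕ} (Q : ℕ → Module.End ℝ (Fin m → ℝ)) (a b : ℕ) :
    ascProd Q a b = ((List.range' a (b + 1 - a)).map fun t => 1 - Q t).prod := by
  rw [ascProd, List.range'_eq_map_range, List.map_map]; rfl

theorem List.range'_eq_append_cons {a n i : ℕ} (h₁ : a ≤ i) (h₂ : i < a + n) :
    List.range' a n = List.range' a (i - a) ++ i :: List.range' (i + 1) (a + n - (i + 1)) := by
  have h := List.range'_append_1 (s := a) (m := i - a) (n := a + n - (i + 1) + 1)
  rwa [show a + (i - a) = i by omega, List.range'_succ,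
    show i - a + (a + n - (i + 1) + 1) = n by omega, eq_comm] at h

theorem piProd_eq_mul_ascProd {m : ℕ} (Q : ℕ → Module.End ℝ (Fin m → ℝ)) {k j : ℕ} (hkj : k ≤ j) :
    piProd Q j = ((List.range k).map fun t => 1 - Q t).prod * (1 - Q k) * ascProd Q (k + 1) j := by
  rw [piProd, List.range_eq_range', List.range'_eq_append_cons (Nat.zero_le k) (by omega),
    ascProd_eq_prod_range', ← List.range_eq_range', List.map_append, List.prod_append,
    List.map_cons, List.prod_cons, mul_assoc, Nat.sub_zero]
  congr 5; omega

section Admissible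

variable {m ν : ℕ} {Q : ℕ → Module.End ℝ (Fin m → ℝ)} {j : ℕ}

theorem ascProd_mul_of_lt (hadm : ∀ i ≤ ν, ∀ j < i, Q i * Q j = 0) (hj : j ≤ ν) {a i : ℕ}
    (hia : i < a) : ascProd Q a j * Q i = Q i := by
  rw [ascProd_eq_prod_range']
  refine prod_map_one_sub_mul_of_forall_mul_eq_zero Q fun t ht => ?_
  rw [List.mem_range'_1] at ht
  exact hadm t (by omega) i (by omega)

theorem ascProd_mul_eq_zero (hidem : ∀ i ≤ ν, Q i * Q i = Q i)
    (hadm : ∀ i ≤ ν, ∀ j < i, Q i * Q j = 0) (hj : j ≤ ν) {a i : ℕ} (hai : a ≤ i) (hij : i ≤ j) :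
    ascProd Q a j * Q i = 0 := by
  rw [ascProd_eq_prod_range', List.range'_eq_append_cons hai (by omega)]
  refine prod_map_one_sub_mul_eq_zero Q (hidem i (by omega)) fun t ht => ?_
  rw [List.mem_range'_1] at ht
  exact hadm t (by omega) i (by omega)

variable {k : ℕ}

theorem Q_mul_ascProd_mul_self (hidem : ∀ i ≤ ν, Q i * Q i = Q i)
    (hadm : ∀ i ≤ ν, ∀ j < i, Q i * Q j = 0) (hj : j ≤ ν) (hk : k < j) :
    Q k * ascProd Q (k + 1) j * Q k = Q k := by
  rw [mul_assoc, ascProd_mul_of_lt hadm hj k.lt_succ_self, hidem k (by omega)]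

theorem Q_mul_ascProd_mul_of_ne (hidem : ∀ i ≤ ν, Q i * Q i = Q i)
    (hadm : ∀ i ≤ ν, ∀ j < i, Q i * Q j = 0) (hj : j ≤ ν) (hk : k < j) {i : ℕ} (hij : i ≤ j)
    (hik : i ≠ k) :
    Q k * ascProd Q (k + 1) j * Q i = 0 := by
  rcases hik.lt_or_gt with hik | hki
  · rw [mul_assoc, ascProd_mul_of_lt hadm hj (by omega), hadm k (by omega) i hik]
  · rw [mul_assoc, ascProd_mul_eq_zero hidem hadm hj hki hij, mul_zero]

theorem Q_mul_ascProd_mul_piProd (hidem : ∀ i ≤ ν, Q i * Q i = Q i)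
    (hadm : ∀ i ≤ ν, ∀ j < i, Q i * Q j = 0) (hj : j ≤ ν) (hk : k < j) :
    Q k * ascProd Q (k + 1) j * piProd Q j = 0 := by
  have hT : ∀ t ≤ j, t ≠ k → Q k * ascProd Q (k + 1) j * Q t = 0 :=
    fun t => Q_mul_ascProd_mul_of_ne hidem hadm hj hk
  have hR := mul_prod_map_one_sub_of_forall_mul_eq_zero Q (l := List.range k) fun t ht =>
    hT t (by rw [List.mem_range] at ht; omega) (by rw [List.mem_range] at ht; omega)
  have hA := mul_prod_map_one_sub_of_forall_mul_eq_zero Q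
    (l := List.range' (k + 1) (j + 1 - (k + 1))) fun t ht =>
      hT t (by rw [List.mem_range'_1] at ht; omega) (by rw [List.mem_range'_1] at ht; omega)
  rw [← ascProd_eq_prod_range'] at hA
  rw [piProd_eq_mul_ascProd Q hk.le, ← mul_assoc, ← mul_assoc, hR, mul_sub, mul_one,
    Q_mul_ascProd_mul_self hidem hadm hj hk, sub_mul, hA, sub_self]

end Admissible

theorem range_mul_eq_range_of_mul_mul_eq {R M : Type*} [Semiring R] [AddCommMonoid M] [Module R M]
    {q a : Module.End R M} (h : q * a * q = q) : LinearMap.range (q * a) = LinearMap.range q :=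
  le_antisymm (LinearMap.range_comp_le_range a q) <|
    calc LinearMap.range q = LinearMap.range (q * a * q) := by rw [h]
      _ ≤ LinearMap.range (q * a) := LinearMap.range_comp_le_range q (q * a)

theorem ker_eq_iSup_range_sup_range {R M ι : Type*} [Ring R] [AddCommGroup M] [Module R M]
    (f : ι → Module.End R M) (l : List ι) {T S U : Module.End R M} (hT : ∀ i ∈ l, T * f i = 0)
    (hTS : T * S = 0) (hS : S = (l.map fun t => 1 - f t).prod - U * T) :
    LinearMap.ker T = (⨆ i ∈ l, LinearMap.range (f i)) ⊔ LinearMap.range S := by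
  refine le_antisymm (fun x hx => ?_) (sup_le (iSup₂_le fun i hi => ?_) ?_)
  · have hx' : x = (1 - (l.map fun t => 1 - f t).prod) x + S x + U (T x) := by
      rw [hS]; simp only [LinearMap.sub_apply, Module.End.mul_apply, Module.End.one_apply]; abel
    rw [hx', LinearMap.mem_ker.1 hx, map_zero, add_zero]
    exact Submodule.add_mem_sup (range_one_sub_prod_map_one_sub_le f l ⟨x, rfl⟩) ⟨x, rfl⟩
  · exact LinearMap.range_le_ker_iff.2 (hT i hi)
  · exact LinearMap.range_le_ker_iff.2 hTS

theorem range_ker_Q_ascProd_general {m ν : ℕ} (Q : ℕ → Module.End ℝ (Fin m → ℝ))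
    (hidem : ∀ i ≤ ν, Q i * Q i = Q i)
    (hadm : ∀ i ≤ ν, ∀ j < i, Q i * Q j = 0) :
    ∀ j ≤ ν, ∀ k < j,
      LinearMap.range (Q k * ascProd Q (k + 1) j) = LinearMap.range (Q k) ∧
      LinearMap.ker (Q k * ascProd Q (k + 1) j) =
        (⨆ i ∈ (Finset.range (j + 1)).erase k, LinearMap.range (Q i)) ⊔
          LinearMap.range (piProd Q j) := by
  intro j hj k hk
  set l := List.range k ++ List.range' (k + 1) (j + 1 - (k + 1))
  have hl : ∀ i, i ∈ l ↔ i ∈ (Finset.range (j + 1)).erase k := by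
    intro i; simp only [l, List.mem_append, List.mem_range, List.mem_range'_1, Finset.mem_erase,
      Finset.mem_range]; omega
  have hsupp : ⨆ i ∈ l, LinearMap.range (Q i) =
      ⨆ i ∈ (Finset.range (j + 1)).erase k, LinearMap.range (Q i) := by
    simp_rw [hl]
  have hTQ : ∀ i ∈ l, Q k * ascProd Q (k + 1) j * Q i = 0 := fun i hi => by
    obtain ⟨hik, hij⟩ := Finset.mem_erase.1 ((hl i).1 hi)
    exact Q_mul_ascProd_mul_of_ne hidem hadm hj hk (Nat.lt_succ_iff.1 (Finset.mem_range.1 hij)) hik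
  have hPi : piProd Q j = (l.map fun t => 1 - Q t).prod -
      ((List.range k).map fun t => 1 - Q t).prod * (Q k * ascProd Q (k + 1) j) := by
    rw [piProd_eq_mul_ascProd Q hk.le, List.map_append, List.prod_append, ← ascProd_eq_prod_range',
      mul_sub, mul_one, sub_mul, mul_assoc _ (Q k)]
  refine ⟨range_mul_eq_range_of_mul_mul_eq (Q_mul_ascProd_mul_self hidem hadm hj hk), ?_⟩
  rw [← hsupp]
  exact ker_eq_iSup_range_sup_range Q l hTQ (Q_mul_ascProd_mul_piProd hidem hadm hj hk) hPi

theorem range_ker_Q_ascProd {m ν : ℕ} (Q : ℕ → Module.End ℝ (Fin m → ℝ))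
    (hidem : ∀ i ≤ ν, Q i * Q i = Q i)
    (hind : ∀ i ≤ ν,
      (⨆ j ∈ Finset.range i, LinearMap.range (Q j)) ⊓ LinearMap.range (Q i) = ⊥)
    (hadm : ∀ i ≤ ν, ∀ j < i, Q i * Q j = 0) :
    ∀ j ≤ ν, ∀ k < j,
      LinearMap.range (Q k * ascProd Q (k + 1) j) = LinearMap.range (Q k) ∧
      LinearMap.ker (Q k * ascProd Q (k + 1) j) =
        (⨆ i ∈ (Finset.range (j + 1)).erase k, LinearMap.range (Q i)) ⊔
          LinearMap.range (piProd Q j) :=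
  range_ker_Q_ascProd_general Q hidem hadm
end

section
/- With admissible projectors Q₀, ..., Q_{ν−1} and U_k := M_k P_{k+1} ⋯ P_{ν−1}, where M_k = Π_{k−1} Q_k, one has U_k = Π_{k−1} V_k with V_k = Q_k P_{k+1} ⋯ P_{ν−1}, im U_k = im Π_{k−1} ∩ (N₀ ⊕ ⋯ ⊕ N_k), and ker U_k = N₀ ⊕ ⋯ ⊕ N_{k−1} ⊕ N_{k+1} ⊕ ⋯ ⊕ N_{ν−1} ⊕ im Π_{ν−1}. -/
namespace UAux

variable {m : ℕ}

noncomputable def ap (Q : ℕ → Module.End ℝ (Fin m → ℝ)) (a n : ℕ) :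
    Module.End ℝ (Fin m → ℝ) :=
  ((List.range n).map (fun t => 1 - Q (a + t))).prod

noncomputable def pp (Q : ℕ → Module.End ℝ (Fin m → ℝ)) (k : ℕ) :
    Module.End ℝ (Fin m → ℝ) :=
  ((List.range k).map (fun i => 1 - Q i)).prod

variable (Q : ℕ → Module.End ℝ (Fin m → ℝ))

lemma ap_zero (a : ℕ) : ap Q a 0 = 1 := rfl

lemma pp_zero : pp Q 0 = 1 := rfl

lemma ap_succ (a n : ℕ) : ap Q a (n + 1) = ap Q a n * (1 - Q (a + n)) := by
  simp [ap, List.range_succ]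

lemma pp_succ (k : ℕ) : pp Q (k + 1) = pp Q k * (1 - Q k) := by
  simp [pp, List.range_succ]

lemma ap_cons (a n : ℕ) : ap Q a (n + 1) = (1 - Q a) * ap Q (a + 1) n := by
  induction n generalizing a with
  | zero => simp [ap_succ, ap_zero]
  | succ n ih =>
      rw [ap_succ, ih, mul_assoc]
      have h : a + (n + 1) = (a + 1) + n := by omega
      rw [h, ← ap_succ]

lemma pp_eq_ap (k : ℕ) : pp Q k = ap Q 0 k := by
  simp [pp, ap]

variable {Q} {ν : ℕ}

lemma ap_mul_Q_zero (hidem : ∀ i < ν, Q i * Q i = Q i)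
    (hadm : ∀ i < ν, ∀ j < i, Q i * Q j = 0) :
    ∀ n a i, a ≤ i → i < a + n → a + n ≤ ν → ap Q a n * Q i = 0 := by
  intro n
  induction n with
  | zero => intro a i h1 h2 h3; omega
  | succ n ih =>
      intro a i h1 h2 h3
      rw [ap_succ, mul_assoc]
      have hcase : i = a + n ∨ i < a + n := by omega
      rcases hcase with he | hl
      · have h0 : (1 - Q (a + n)) * Q i = 0 := by
          rw [← he, sub_mul, one_mul, hidem i (by omega), sub_self]
        rw [h0, mul_zero]
      · have h0 : (1 - Q (a + n)) * Q i = Q i := by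
          rw [sub_mul, one_mul, hadm (a + n) (by omega) i hl, sub_zero]
        rw [h0]
        exact ih a i h1 hl (by omega)

lemma ap_mul_Q_id (hadm : ∀ i < ν, ∀ j < i, Q i * Q j = 0) :
    ∀ n a i, i < a → a + n ≤ ν → ap Q a n * Q i = Q i := by
  intro n
  induction n with
  | zero => intro a i h1 h2; simp [ap_zero]
  | succ n ih =>
      intro a i h1 h2
      rw [ap_succ, mul_assoc]
      have h0 : (1 - Q (a + n)) * Q i = Q i := by
        rw [sub_mul, one_mul, hadm (a + n) (by omega) i (by omega), sub_zero]
      rw [h0]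
      exact ih a i h1 (by omega)

lemma Q_mul_ap_zero (hidem : ∀ i < ν, Q i * Q i = Q i)
    (hadm : ∀ i < ν, ∀ j < i, Q i * Q j = 0) :
    ∀ n a i, a ≤ i → i < a + n → i < ν → Q i * ap Q a n = 0 := by
  intro n
  induction n with
  | zero => intro a i h1 h2 h3; omega
  | succ n ih =>
      intro a i h1 h2 h3
      rw [ap_cons, ← mul_assoc]
      have hcase : i = a ∨ a < i := by omega
      rcases hcase with he | hl
      · have h0 : Q i * (1 - Q a) = 0 := by
          rw [← he, mul_sub, mul_one, hidem i h3, sub_self]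
        rw [h0, zero_mul]
      · have h0 : Q i * (1 - Q a) = Q i := by
          rw [mul_sub, mul_one, hadm i h3 a hl, sub_zero]
        rw [h0]
        exact ih (a + 1) i (by omega) (by omega) h3

lemma ap_mul_ppν (hidem : ∀ i < ν, Q i * Q i = Q i)
    (hadm : ∀ i < ν, ∀ j < i, Q i * Q j = 0) :
    ∀ n a, a + n ≤ ν → ap Q a n * pp Q ν = pp Q ν := by
  intro n
  induction n with
  | zero => intro a h; simp [ap_zero]
  | succ n ih =>
      intro a h
      rw [ap_succ, mul_assoc]
      have h0 : (1 - Q (a + n)) * pp Q ν = pp Q ν := by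
        rw [sub_mul, one_mul, pp_eq_ap,
          Q_mul_ap_zero hidem hadm ν 0 (a + n) (by omega) (by omega) (by omega), sub_zero]
      rw [h0]
      exact ih a (by omega)

lemma sum_M (Q : ℕ → Module.End ℝ (Fin m → ℝ)) (ν : ℕ) :
    (∑ j ∈ Finset.range ν, pp Q j * Q j) + pp Q ν = 1 := by
  have h : ∀ j, pp Q j * Q j = pp Q j - pp Q (j + 1) := by
    intro j; rw [pp_succ, mul_sub, mul_one, sub_sub_cancel]
  rw [Finset.sum_congr rfl (fun j _ => h j), Finset.sum_range_sub' (fun j => pp Q j), pp_zero]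
  abel

lemma sub_ap_mem (Q : ℕ → Module.End ℝ (Fin m → ℝ)) :
    ∀ n a (x : Fin m → ℝ),
      x - ap Q a n x ∈ ⨆ t ∈ Finset.range n, LinearMap.range (Q (a + t)) := by
  intro n
  induction n with
  | zero => intro a x; simp [ap_zero]
  | succ n ih =>
      intro a x
      set y := (1 - Q (a + n)) x with hy
      have hsplit : x - ap Q a (n + 1) x = Q (a + n) x + (y - ap Q a n y) := by
        have h1 : ap Q a (n + 1) x = ap Q a n y := by rw [ap_succ]; rfl
        have h2 : y = x - Q (a + n) x := by
          simp [hy, LinearMap.sub_apply]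
        rw [h1, h2]; abel
      rw [hsplit]
      refine Submodule.add_mem _ ?_ ?_
      · exact le_iSup₂ (f := fun t (_ : t ∈ Finset.range (n + 1)) => LinearMap.range (Q (a + t)))
          n (Finset.self_mem_range_succ n) ⟨x, rfl⟩
      · have hle : (⨆ t ∈ Finset.range n, LinearMap.range (Q (a + t))) ≤
            ⨆ t ∈ Finset.range (n + 1), LinearMap.range (Q (a + t)) :=
          biSup_mono (fun t ht => Finset.mem_range.mpr
            (Nat.lt_succ_of_lt (Finset.mem_range.mp ht)))
        exact hle (ih a y)

lemma M_mem (Q : ℕ → Module.End ℝ (Fin m → ℝ)) (j : ℕ) (w : Fin m → ℝ) :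
    (pp Q j * Q j) w ∈ ⨆ i ∈ Finset.range (j + 1), LinearMap.range (Q i) := by
  have h := sub_ap_mem Q j 0 (Q j w)
  simp only [Nat.zero_add] at h
  have heq : (pp Q j * Q j) w = Q j w - (Q j w - ap Q 0 j (Q j w)) := by
    rw [Module.End.mul_apply, pp_eq_ap]; abel
  rw [heq]
  refine Submodule.sub_mem _ ?_ ?_
  · exact le_iSup₂ (f := fun i (_ : i ∈ Finset.range (j + 1)) => LinearMap.range (Q i))
      j (Finset.self_mem_range_succ j) ⟨w, rfl⟩
  · have hle : (⨆ t ∈ Finset.range j, LinearMap.range (Q t)) ≤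
        ⨆ i ∈ Finset.range (j + 1), LinearMap.range (Q i) :=
      biSup_mono (fun t ht => Finset.mem_range.mpr
        (Nat.lt_succ_of_lt (Finset.mem_range.mp ht)))
    exact hle h

lemma ap_apply_id (Q : ℕ → Module.End ℝ (Fin m → ℝ)) :
    ∀ n a (x : Fin m → ℝ), (∀ t, t < n → Q (a + t) x = 0) → ap Q a n x = x := by
  intro n
  induction n with
  | zero => intro a x _; simp [ap_zero]
  | succ n ih =>
      intro a x h
      rw [ap_succ, Module.End.mul_apply]
      have h0 : (1 - Q (a + n)) x = x := by
        simp [LinearMap.sub_apply, h n (Nat.lt_succ_self n)]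
      rw [h0]
      exact ih a x (fun t ht => h t (by omega))

end UAux


theorem U_eq_and_range_ker {m ν : ℕ} (Q : ℕ → Module.End ℝ (Fin m → ℝ))
    (hidem : ∀ i < ν, Q i * Q i = Q i)
    (hind : ∀ i < ν,
      (⨆ j ∈ Finset.range i, LinearMap.range (Q j)) ⊓ LinearMap.range (Q i) = ⊥)
    (hadm : ∀ i < ν, ∀ j < i, Q i * Q j = 0) :
    ∀ k < ν,
      (piPred Q k * Q k) * ascProd Q (k + 1) (ν - 1)
        = piPred Q k * (Q k * ascProd Q (k + 1) (ν - 1)) ∧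
      LinearMap.range ((piPred Q k * Q k) * ascProd Q (k + 1) (ν - 1)) =
        LinearMap.range (piPred Q k) ⊓
          (⨆ i ∈ Finset.range (k + 1), LinearMap.range (Q i)) ∧
      LinearMap.ker ((piPred Q k * Q k) * ascProd Q (k + 1) (ν - 1)) =
        (⨆ i ∈ (Finset.range ν).erase k, LinearMap.range (Q i)) ⊔
          LinearMap.range (piProd Q (ν - 1)) := by
  intro k hk
  set n₁ := ν - (k + 1) with hn₁
  have hpred : piPred Q k = UAux.pp Q k := by
    cases k with
    | zero => simp [piPred, UAux.pp]
    | succ k => simp [piPred, piProd, UAux.pp]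
  have hasc : ascProd Q (k + 1) (ν - 1) = UAux.ap Q (k + 1) n₁ := by
    show UAux.ap Q (k + 1) (ν - 1 + 1 - (k + 1)) = UAux.ap Q (k + 1) n₁
    congr 1; omega
  have hprod : piProd Q (ν - 1) = UAux.pp Q ν := by
    show UAux.pp Q (ν - 1 + 1) = UAux.pp Q ν
    congr 1; omega
  rw [hpred, hasc, hprod]
  -- basic operator facts
  have hAQ0 : ∀ i, k < i → i < ν → UAux.ap Q (k + 1) n₁ * Q i = 0 := fun i h1 h2 =>
    UAux.ap_mul_Q_zero hidem hadm n₁ (k + 1) i (by omega) (by omega) (by omega)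
  have hAQid : ∀ i, i ≤ k → UAux.ap Q (k + 1) n₁ * Q i = Q i := fun i h1 =>
    UAux.ap_mul_Q_id hadm n₁ (k + 1) i (by omega) (by omega)
  have hQA0 : ∀ j, k < j → j < ν → Q j * UAux.ap Q (k + 1) n₁ = 0 := fun j h1 h2 =>
    UAux.Q_mul_ap_zero hidem hadm n₁ (k + 1) j (by omega) (by omega) h2
  have hQppν : ∀ i, i < ν → Q i * UAux.pp Q ν = 0 := fun i h => by
    rw [UAux.pp_eq_ap]
    exact UAux.Q_mul_ap_zero hidem hadm ν 0 i (by omega) (by omega) h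
  have hppνQ : ∀ i, i < ν → UAux.pp Q ν * Q i = 0 := fun i h => by
    rw [UAux.pp_eq_ap]
    exact UAux.ap_mul_Q_zero hidem hadm ν 0 i (by omega) (by omega) (by omega)
  have hAppν : UAux.ap Q (k + 1) n₁ * UAux.pp Q ν = UAux.pp Q ν :=
    UAux.ap_mul_ppν hidem hadm n₁ (k + 1) (by omega)
  have hUQ : ∀ i, i < ν → i ≠ k →
      (UAux.pp Q k * Q k) * UAux.ap Q (k + 1) n₁ * Q i = 0 := by
    intro i hi hne
    rcases lt_or_gt_of_ne hne with hlt | hgt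
    · rw [mul_assoc, hAQid i (by omega), mul_assoc, hadm k hk i hlt, mul_zero]
    · rw [mul_assoc, hAQ0 i hgt hi, mul_zero]
  have hUppν : (UAux.pp Q k * Q k) * UAux.ap Q (k + 1) n₁ * UAux.pp Q ν = 0 := by
    rw [mul_assoc, hAppν, mul_assoc, hQppν k hk, mul_zero]
  refine ⟨mul_assoc _ _ _, ?_, ?_⟩
  · -- range
    apply le_antisymm
    · rintro x ⟨z, rfl⟩
      refine Submodule.mem_inf.mpr ⟨?_, ?_⟩
      · exact ⟨(Q k * UAux.ap Q (k + 1) n₁) z, by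
          rw [← Module.End.mul_apply, ← mul_assoc]⟩
      · exact UAux.M_mem Q k (UAux.ap Q (k + 1) n₁ z)
    · rintro x hx
      rw [Submodule.mem_inf] at hx
      obtain ⟨⟨z, rfl⟩, hx2⟩ := hx
      have c1 : ∀ j, k < j → j < ν → Q j (UAux.pp Q k z) = 0 := by
        intro j h1 h2
        have hle : (⨆ i ∈ Finset.range (k + 1), LinearMap.range (Q i)) ≤
            LinearMap.ker (Q j) := by
          refine iSup₂_le fun i hi => ?_
          rintro w ⟨u, rfl⟩
          refine LinearMap.mem_ker.mpr ?_
          rw [← Module.End.mul_apply, hadm j h2 i (by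
            have := Finset.mem_range.mp hi; omega), LinearMap.zero_apply]
        exact LinearMap.mem_ker.mp (hle hx2)
      have c2 : UAux.ap Q (k + 1) n₁ (UAux.pp Q k z) = UAux.pp Q k z :=
        UAux.ap_apply_id Q n₁ (k + 1) _ (fun t ht => c1 (k + 1 + t) (by omega) (by omega))
      have c3 : ∀ j, j < k → Q j (UAux.pp Q k z) = 0 := by
        intro j hj
        rw [← Module.End.mul_apply, UAux.pp_eq_ap,
          UAux.Q_mul_ap_zero hidem hadm k 0 j (by omega) (by omega) (by omega),
          LinearMap.zero_apply]
      have c4 : UAux.pp Q ν (UAux.pp Q k z) = 0 := by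
        have hle : (⨆ i ∈ Finset.range (k + 1), LinearMap.range (Q i)) ≤
            LinearMap.ker (UAux.pp Q ν) := by
          refine iSup₂_le fun i hi => ?_
          rintro w ⟨u, rfl⟩
          refine LinearMap.mem_ker.mpr ?_
          rw [← Module.End.mul_apply, hppνQ i (by
            have := Finset.mem_range.mp hi; omega), LinearMap.zero_apply]
        exact LinearMap.mem_ker.mp (hle hx2)
      have happ := LinearMap.congr_fun (UAux.sum_M Q ν) (UAux.pp Q k z)
      rw [LinearMap.add_apply, Module.End.one_apply, LinearMap.sum_apply] at happ
      have hs : ∑ j ∈ Finset.range ν, (UAux.pp Q j * Q j) (UAux.pp Q k z) =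
          (UAux.pp Q k * Q k) (UAux.pp Q k z) := by
        refine Finset.sum_eq_single k ?_ ?_
        · intro j hj hne
          rcases lt_or_gt_of_ne hne with h | h
          · rw [Module.End.mul_apply, c3 j h, map_zero]
          · rw [Module.End.mul_apply, c1 j h (Finset.mem_range.mp hj), map_zero]
        · intro h; exact absurd (Finset.mem_range.mpr hk) h
      rw [hs, c4, add_zero] at happ
      exact ⟨UAux.pp Q k z, by rw [Module.End.mul_apply, c2]; exact happ⟩
  · -- kernel
    apply le_antisymm
    · intro x hx
      have hUx : ((UAux.pp Q k * Q k) * UAux.ap Q (k + 1) n₁) x = 0 :=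
        LinearMap.mem_ker.mp hx
      have hxsplit : x = (x - UAux.ap Q (k + 1) n₁ x) + UAux.ap Q (k + 1) n₁ x := by abel
      rw [hxsplit]
      refine Submodule.add_mem _ ?_ ?_
      · have h := UAux.sub_ap_mem Q n₁ (k + 1) x
        have hle : (⨆ t ∈ Finset.range n₁, LinearMap.range (Q (k + 1 + t))) ≤
            (⨆ i ∈ (Finset.range ν).erase k, LinearMap.range (Q i)) ⊔
              LinearMap.range (UAux.pp Q ν) := by
          refine iSup₂_le fun t ht => le_sup_of_le_left ?_
          exact le_iSup₂ (f := fun i (_ : i ∈ (Finset.range ν).erase k) =>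
              LinearMap.range (Q i)) (k + 1 + t)
            (Finset.mem_erase.mpr ⟨by omega, Finset.mem_range.mpr (by
              have := Finset.mem_range.mp ht; omega)⟩)
        exact hle h
      · set y := UAux.ap Q (k + 1) n₁ x with hy
        have happ := LinearMap.congr_fun (UAux.sum_M Q ν) y
        rw [LinearMap.add_apply, Module.End.one_apply, LinearMap.sum_apply] at happ
        rw [← happ]
        refine Submodule.add_mem _ ?_ (le_sup_right (α := Submodule ℝ (Fin m → ℝ)) ⟨y, rfl⟩)
        refine Submodule.sum_mem _ ?_
        intro j hj
        rcases Nat.lt_trichotomy j k with h | h | h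
        · have hmem := UAux.M_mem Q j y
          have hle : (⨆ i ∈ Finset.range (j + 1), LinearMap.range (Q i)) ≤
              (⨆ i ∈ (Finset.range ν).erase k, LinearMap.range (Q i)) ⊔
                LinearMap.range (UAux.pp Q ν) := by
            refine iSup₂_le fun i hi => le_sup_of_le_left ?_
            exact le_iSup₂ (f := fun i (_ : i ∈ (Finset.range ν).erase k) =>
                LinearMap.range (Q i)) i
              (Finset.mem_erase.mpr ⟨by have := Finset.mem_range.mp hi; omega,
                Finset.mem_range.mpr (by have := Finset.mem_range.mp hi; omega)⟩)
          exact hle hmem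
        · subst h
          have h0 : (UAux.pp Q j * Q j) y = 0 := hUx
          rw [h0]; exact Submodule.zero_mem _
        · have h0 : Q j y = 0 := by
            rw [hy, ← Module.End.mul_apply, hQA0 j h (Finset.mem_range.mp hj),
              LinearMap.zero_apply]
          rw [Module.End.mul_apply, h0, map_zero]
          exact Submodule.zero_mem _
    · refine sup_le ?_ ?_
      · refine iSup₂_le fun i hi => ?_
        obtain ⟨hne, hilt⟩ := Finset.mem_erase.mp hi
        rintro w ⟨u, rfl⟩
        refine LinearMap.mem_ker.mpr ?_
        rw [← Module.End.mul_apply, hUQ i (Finset.mem_range.mp hilt) hne,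
          LinearMap.zero_apply]
      · rintro w ⟨u, rfl⟩
        refine LinearMap.mem_ker.mpr ?_
        rw [← Module.End.mul_apply, hUppν, LinearMap.zero_apply]
end
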